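/- Let A = P₁ + P₂ be positive definite with P₁, P₂ positive semidefinite complex n×n matrices satisfying P₁P₂ = P₂P₁, and let Σ = αI with α > 0. Then the spectral radius of the PPS iteration matrix (Σ + P₁)^{-1}(Σ - P₂)(Σ + P₂)^{-1}(Σ - P₁) is strictly less than 1. -/

import Mathlib

open Matrix ComplexOrder

noncomputable def specNorm {n : ℕ} (M : Matrix (Fin n) (Fin n) ℂ) : ℝ :=
  ‖Matrix.toEuclideanCLM (𝕜 := ℂ) M‖

noncomputable def evnorm {n : ℕ} (x : Fin n → ℂ) : ℝ :=
  ‖(WithLp.equiv 2 (Fin n → ℂ)).symm x‖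

/-- `P` is positive semidefinite in the (possibly non-Hermitian) sense:
`Re (x* P x) ≥ 0` for all `x`. -/
def IsPSD {n : ℕ} (P : Matrix (Fin n) (Fin n) ℂ) : Prop :=
  ∀ x : Fin n → ℂ, 0 ≤ (star x ⬝ᵥ P *ᵥ x).re

/-- `P` is positive definite in the (possibly non-Hermitian) sense:
`Re (x* P x) > 0` for all nonzero `x`. -/
def IsPD {n : ℕ} (P : Matrix (Fin n) (Fin n) ℂ) : Prop :=
  ∀ x : Fin n → ℂ, x ≠ 0 → 0 < (star x ⬝ᵥ P *ᵥ x).re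

/-- The old Mathlib `Matrix.PosSemidef.sqrt` (removed), with its old definition. -/
noncomputable def psdSqrtOld {n : ℕ} {A : Matrix (Fin n) (Fin n) ℂ} (hA : A.PosSemidef) :
    Matrix (Fin n) (Fin n) ℂ :=
  hA.1.eigenvectorUnitary.1 * diagonal ((↑) ∘ (√·) ∘ hA.1.eigenvalues) *
    (star hA.1.eigenvectorUnitary : Matrix (Fin n) (Fin n) ℂ)

/-- `Σ^{-1/2} P Σ^{-1/2}` where `Σ^{1/2}` is the HPD square root of the HPD matrix `Sg`. -/
noncomputable def tild {n : ℕ} (Sg P : Matrix (Fin n) (Fin n) ℂ) (hS : Sg.PosDef) :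
    Matrix (Fin n) (Fin n) ℂ :=
  (psdSqrtOld hS.posSemidef)⁻¹ * P * (psdSqrtOld hS.posSemidef)⁻¹

section AuxLemmas

variable {n : ℕ}

private lemma dot_self_pos {v : Fin n → ℂ} (hv : v ≠ 0) :
    0 < (star v ⬝ᵥ v).re ∧ (star v ⬝ᵥ v).im = 0 := by
  have h := Matrix.dotProduct_star_self_pos_iff (v := v) |>.mpr hv
  rw [Complex.lt_def] at h
  exact ⟨by simpa using h.1, by simpa using h.2.symm⟩

private lemma isUnit_aP {P : Matrix (Fin n) (Fin n) ℂ} {α : ℝ} (hα : 0 < α) (hP : IsPSD P) :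
    IsUnit ((α:ℂ) • 1 + P).det := by
  rw [isUnit_iff_ne_zero]
  intro hdet
  obtain ⟨v, hv, hv0⟩ := (Matrix.exists_mulVec_eq_zero_iff).mpr hdet
  have h0 : star v ⬝ᵥ (((α:ℂ) • 1 + P) *ᵥ v) = 0 := by rw [hv0, dotProduct_zero]
  rw [Matrix.add_mulVec, Matrix.smul_mulVec, Matrix.one_mulVec, dotProduct_add,
    dotProduct_smul] at h0
  have hre := congrArg Complex.re h0
  obtain ⟨hpos, him⟩ := dot_self_pos hv
  have hP' := hP v
  simp [Complex.add_re, Complex.mul_re, him] at hre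
  nlinarith

private lemma eig_re_nonneg {P : Matrix (Fin n) (Fin n) ℂ} (hP : IsPSD P) {v : Fin n → ℂ}
    (hv : v ≠ 0) {β : ℂ} (h : P *ᵥ v = β • v) : 0 ≤ β.re := by
  have hP' := hP v
  rw [h, dotProduct_smul] at hP'
  obtain ⟨hpos, him⟩ := dot_self_pos hv
  rw [smul_eq_mul, Complex.mul_re, him] at hP'
  simp at hP'
  nlinarith

private lemma cayley_abs {α : ℝ} (hα : 0 < α) {β : ℂ} (hβ : 0 ≤ β.re) :
    ‖(((α:ℂ) - β)/((α:ℂ) + β))‖ ≤ 1 ∧ (0 < β.re → ‖(((α:ℂ) - β)/((α:ℂ) + β))‖ < 1) := by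
  have hd : ((α:ℂ) + β) ≠ 0 := by
    intro h
    have := congrArg Complex.re h
    simp at this
    linarith
  have hdn : 0 < ‖(α:ℂ) + β‖ := norm_pos_iff.mpr hd
  have hnum : 0 ≤ ‖(α:ℂ) - β‖ := norm_nonneg _
  have e1 : ‖(α:ℂ) - β‖^2 = (α - β.re)^2 + β.im^2 := by
    rw [Complex.sq_norm, Complex.normSq_apply]
    simp [Complex.sub_re, Complex.sub_im]
    ring
  have e2 : ‖(α:ℂ) + β‖^2 = (α + β.re)^2 + β.im^2 := by
    rw [Complex.sq_norm, Complex.normSq_apply]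
    simp [Complex.add_re, Complex.add_im]
    ring
  rw [norm_div]
  constructor
  · rw [div_le_one hdn]
    nlinarith
  · intro hb
    rw [div_lt_one hdn]
    nlinarith

private lemma cayley_eigen {P : Matrix (Fin n) (Fin n) ℂ} {α : ℝ} (hα : 0 < α) (hP : IsPSD P)
    {v : Fin n → ℂ} (hv : v ≠ 0) {μ : ℂ}
    (h : ((((α:ℂ) • 1 + P)⁻¹ * ((α:ℂ) • 1 - P))) *ᵥ v = μ • v) :
    ∃ β : ℂ, P *ᵥ v = β • v ∧ 0 ≤ β.re ∧ μ = ((α:ℂ) - β)/((α:ℂ) + β) := by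
  have hu := isUnit_aP hα hP
  have h2 : (((α:ℂ) • 1 - P)) *ᵥ v = μ • (((α:ℂ) • 1 + P) *ᵥ v) := by
    have := congrArg (fun w => ((α:ℂ) • 1 + P) *ᵥ w) h
    simp only [Matrix.mulVec_mulVec, Matrix.mulVec_smul] at this
    rwa [← Matrix.mul_assoc, Matrix.mul_nonsing_inv _ hu, Matrix.one_mul] at this
  rw [Matrix.sub_mulVec, Matrix.add_mulVec, Matrix.smul_mulVec, Matrix.one_mulVec,
    smul_add] at h2
  have h3 : (1 + μ) • (P *ᵥ v) = ((α:ℂ) * (1 - μ)) • v := by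
    funext i
    have hi := congrFun h2 i
    simp only [Pi.smul_apply, Pi.sub_apply, Pi.add_apply, smul_eq_mul] at hi ⊢
    linear_combination -hi
  by_cases hμ : μ = -1
  · exfalso
    rw [hμ] at h3
    norm_num at h3
    have h4 : ((α:ℂ) * 2) • v = 0 := h3.symm
    rcases smul_eq_zero.mp h4 with hc | hc
    · simp at hc
      exact absurd hc (ne_of_gt hα)
    · exact hv hc
  · have h1μ : (1 + μ) ≠ 0 := fun hc => hμ (by linear_combination hc)
    set β : ℂ := (α:ℂ) * (1 - μ) / (1 + μ) with hβdef
    have hβmul : (1 + μ) * β = (α:ℂ) * (1 - μ) := by rw [hβdef]; field_simp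
    have hPv : P *ᵥ v = β • v := by
      apply smul_right_injective (Fin n → ℂ) h1μ
      show (1 + μ) • (P *ᵥ v) = (1 + μ) • (β • v)
      rw [h3, smul_smul, hβmul]
    have hre := eig_re_nonneg hP hv hPv
    refine ⟨β, hPv, hre, ?_⟩
    have haβ : (α:ℂ) + β ≠ 0 := by
      intro hc
      have := congrArg Complex.re hc
      simp at this
      linarith
    rw [eq_div_iff haβ]
    field_simp [hβdef]
    linear_combination hβmul

end AuxLemmas

theorem stmt16 {n : ℕ} (P1 P2 : Matrix (Fin n) (Fin n) ℂ) (α : ℝ) (hα : 0 < α)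
    (h1 : IsPSD P1) (h2 : IsPSD P2) (hcomm : P1 * P2 = P2 * P1)
    (hApd : IsPD (P1 + P2)) :
    spectralRadius ℂ
      (((α : ℂ) • 1 + P1)⁻¹ * ((α : ℂ) • 1 - P2) *
        ((α : ℂ) • 1 + P2)⁻¹ * ((α : ℂ) • 1 - P1)) < 1 := by
  classical
  set A1 : Matrix (Fin n) (Fin n) ℂ := (α : ℂ) • 1 + P1 with hA1
  set B1 : Matrix (Fin n) (Fin n) ℂ := (α : ℂ) • 1 - P1 with hB1
  set A2 : Matrix (Fin n) (Fin n) ℂ := (α : ℂ) • 1 + P2 with hA2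
  set B2 : Matrix (Fin n) (Fin n) ℂ := (α : ℂ) • 1 - P2 with hB2
  set T : Matrix (Fin n) (Fin n) ℂ := A1⁻¹ * B2 * A2⁻¹ * B1 with hT
  have hu1 : IsUnit A1.det := isUnit_aP hα h1
  have hu2 : IsUnit A2.det := isUnit_aP hα h2
  -- commutation facts
  have c1 : ∀ (a : ℂ) (X : Matrix (Fin n) (Fin n) ℂ), Commute ((a : ℂ) • 1) X :=
    fun a X => (Commute.one_left X).smul_left a
  have inv_comm : ∀ (X Y : Matrix (Fin n) (Fin n) ℂ), IsUnit X.det → Commute X Y →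
      Commute X⁻¹ Y := by
    intro X Y hX hXY
    show X⁻¹ * Y = Y * X⁻¹
    calc X⁻¹ * Y = X⁻¹ * Y * X * X⁻¹ := by
          rw [Matrix.mul_nonsing_inv_cancel_right _ _ hX]
      _ = X⁻¹ * (X * Y) * X⁻¹ := by
          rw [Matrix.mul_assoc X⁻¹ Y X, ← hXY.eq]
      _ = Y * X⁻¹ := by rw [← Matrix.mul_assoc, Matrix.nonsing_inv_mul _ hX, Matrix.one_mul]
  have cP1A1 : Commute P1 A1 := ((c1 α P1).symm).add_right (Commute.refl P1)
  have cP1B1 : Commute P1 B1 := ((c1 α P1).symm).sub_right (Commute.refl P1)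
  have cP1A2 : Commute P1 A2 := ((c1 α P1).symm).add_right hcomm
  have cP1B2 : Commute P1 B2 := ((c1 α P1).symm).sub_right hcomm
  have cP1iA1 : Commute P1 A1⁻¹ := (inv_comm A1 P1 hu1 cP1A1.symm).symm
  have cP1iA2 : Commute P1 A2⁻¹ := (inv_comm A2 P1 hu2 cP1A2.symm).symm
  have cP1T : Commute P1 T := ((cP1iA1.mul_right cP1B2).mul_right cP1iA2).mul_right cP1B1
  have cA2B2 : Commute A2 B2 :=
    (c1 α B2).add_left (((c1 α P2).symm).sub_right (Commute.refl P2))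
  have ciA2B2 : Commute A2⁻¹ B2 := inv_comm A2 B2 hu2 cA2B2
  -- main pointwise bound on the spectrum
  have key : ∀ lam ∈ spectrum ℂ T, ‖lam‖ < 1 := by
    intro lam hlam
    rw [spectrum.mem_iff] at hlam
    have hdet : ((lam • 1 : Matrix (Fin n) (Fin n) ℂ) - T).det = 0 := by
      by_contra hd
      exact hlam (by
        rw [Algebra.algebraMap_eq_smul_one]
        exact (Matrix.isUnit_iff_isUnit_det _).mpr (isUnit_iff_ne_zero.mpr hd))
    obtain ⟨x, hx0, hx⟩ := Matrix.exists_mulVec_eq_zero_iff.mpr hdet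
    have hxT : T *ᵥ x = lam • x := by
      rw [Matrix.sub_mulVec, Matrix.smul_mulVec, Matrix.one_mulVec, sub_eq_zero] at hx
      exact hx.symm
    -- the eigenspace of T for lam
    set g : Module.End ℂ (Fin n → ℂ) := Matrix.mulVecLin T with hg
    set E : Submodule ℂ (Fin n → ℂ) := Module.End.eigenspace g lam with hE
    have hxE : x ∈ E := by
      rw [hE, Module.End.mem_eigenspace_iff, hg, Matrix.mulVecLin_apply]
      exact hxT
    have hEnt : Nontrivial E :=
      Submodule.nontrivial_iff_ne_bot.mpr (Submodule.ne_bot_iff E |>.mpr ⟨x, hxE, hx0⟩)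
    have hinv : ∀ z ∈ E, Matrix.mulVecLin P1 z ∈ E := by
      intro z hz
      rw [hE, Module.End.mem_eigenspace_iff] at hz ⊢
      rw [hg, Matrix.mulVecLin_apply, Matrix.mulVecLin_apply] at *
      rw [Matrix.mulVec_mulVec, ← cP1T.eq, ← Matrix.mulVec_mulVec, hz, Matrix.mulVec_smul]
    set f' : Module.End ℂ E := LinearMap.restrict (Matrix.mulVecLin P1) hinv with hf'
    obtain ⟨β1, hβ1⟩ := Module.End.exists_eigenvalue f'
    obtain ⟨v', hv'⟩ := hβ1.exists_hasEigenvector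
    set v : Fin n → ℂ := (v' : Fin n → ℂ) with hvdef
    have hvne : v ≠ 0 := fun hc => hv'.2 (Subtype.ext hc)
    have hP1v : P1 *ᵥ v = β1 • v := by
      have := hv'.apply_eq_smul
      have h' := congrArg (Subtype.val) this
      rw [hf', LinearMap.restrict_coe_apply] at h'
      simpa [Matrix.mulVecLin_apply] using h'
    have hTv : T *ᵥ v = lam • v := by
      have hvE : v ∈ E := v'.2
      rw [hE, Module.End.mem_eigenspace_iff, hg, Matrix.mulVecLin_apply] at hvE
      exact hvE
    have hβ1re : 0 ≤ β1.re := eig_re_nonneg h1 hvne hP1v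
    have haβ1 : (α:ℂ) + β1 ≠ 0 := by
      intro hc
      have := congrArg Complex.re hc
      simp at this
      linarith
    -- action of the four factors on v
    have hB1v : B1 *ᵥ v = ((α:ℂ) - β1) • v := by
      rw [hB1, Matrix.sub_mulVec, Matrix.smul_mulVec, Matrix.one_mulVec, hP1v, sub_smul]
    have hA1v : A1 *ᵥ v = ((α:ℂ) + β1) • v := by
      rw [hA1, Matrix.add_mulVec, Matrix.smul_mulVec, Matrix.one_mulVec, hP1v, add_smul]
    have hiA1v : A1⁻¹ *ᵥ v = ((α:ℂ) + β1)⁻¹ • v := by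
      have h0 : A1⁻¹ *ᵥ (A1 *ᵥ v) = v := by
        rw [Matrix.mulVec_mulVec, Matrix.nonsing_inv_mul _ hu1, Matrix.one_mulVec]
      rw [hA1v, Matrix.mulVec_smul] at h0
      have := congrArg (fun w => ((α:ℂ) + β1)⁻¹ • w) h0
      simp only [smul_smul, inv_mul_cancel₀ haβ1, one_smul] at this
      exact this
    by_cases hab1 : (α:ℂ) - β1 = 0
    · -- then lam = 0
      have : lam • v = 0 := by
        rw [← hTv, hT, ← Matrix.mulVec_mulVec, hB1v, hab1, zero_smul, Matrix.mulVec_zero]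
      rcases smul_eq_zero.mp this with hc | hc
      · rw [hc]; norm_num
      · exact absurd hc hvne
    · -- C2 eigenvector
      have hMv : (A1⁻¹ * B2 * A2⁻¹) *ᵥ v = (((α:ℂ) - β1)⁻¹ * lam) • v := by
        have h0 : ((α:ℂ) - β1) • ((A1⁻¹ * B2 * A2⁻¹) *ᵥ v) = lam • v := by
          rw [← Matrix.mulVec_smul, ← hB1v, Matrix.mulVec_mulVec, ← hT, hTv]
        have := congrArg (fun w => ((α:ℂ) - β1)⁻¹ • w) h0
        simp only [smul_smul, inv_mul_cancel₀ hab1, one_smul] at this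
        exact this
      have hC2v : (A2⁻¹ * B2) *ᵥ v = ((((α:ℂ) + β1) * (((α:ℂ) - β1)⁻¹ * lam))) • v := by
        have h0 : A1⁻¹ *ᵥ ((A2⁻¹ * B2) *ᵥ v) = (((α:ℂ) - β1)⁻¹ * lam) • v := by
          rw [Matrix.mulVec_mulVec, ciA2B2.eq, ← Matrix.mul_assoc]
          exact hMv
        have h0' := congrArg (fun w => A1 *ᵥ w) h0
        simp only [Matrix.mulVec_mulVec, Matrix.mulVec_smul] at h0'
        rw [← Matrix.mul_assoc, Matrix.mul_nonsing_inv _ hu1, Matrix.one_mul] at h0'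
        rw [h0', hA1v, smul_smul]
        congr 1
        ring
      obtain ⟨β2, hP2v, hβ2re, hν⟩ := cayley_eigen hα h2 hvne hC2v
      -- lam = μ * ν
      have hlamval : lam = (((α:ℂ) - β1)/((α:ℂ) + β1)) * ((((α:ℂ) - β2)/((α:ℂ) + β2))) := by
        rw [← hν]
        field_simp [hab1, haβ1]
      -- positivity of the sum of real parts
      have hsum : 0 < β1.re + β2.re := by
        have hPD := hApd v hvne
        rw [Matrix.add_mulVec, hP1v, hP2v, ← add_smul, dotProduct_smul, smul_eq_mul] at hPD
        obtain ⟨hpos, him⟩ := dot_self_pos hvne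
        rw [Complex.mul_re, him] at hPD
        simp at hPD
        nlinarith
      have hc1 := cayley_abs hα hβ1re
      have hc2 := cayley_abs hα hβ2re
      rw [hlamval, norm_mul]
      rcases lt_or_ge 0 β1.re with hb | hb
      · have := hc1.2 hb
        nlinarith [norm_nonneg ((((α:ℂ) - β2)/((α:ℂ) + β2))), hc2.1,
          norm_nonneg ((((α:ℂ) - β1)/((α:ℂ) + β1)))]
      · have hb2 : 0 < β2.re := by linarith
        have := hc2.2 hb2
        nlinarith [norm_nonneg ((((α:ℂ) - β2)/((α:ℂ) + β2))), hc1.1,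
          norm_nonneg ((((α:ℂ) - β1)/((α:ℂ) + β1)))]
  -- conclude: the spectral radius is a sup over a finite set of values < 1
  have hfin : (spectrum ℂ T).Finite := Matrix.finite_spectrum T
  rw [spectralRadius]
  have hle : (⨆ k ∈ spectrum ℂ T, (‖k‖₊ : ENNReal)) ≤
      hfin.toFinset.sup (fun k => (‖k‖₊ : ENNReal)) := by
    refine iSup₂_le fun k hk => ?_
    exact Finset.le_sup (f := fun k => (‖k‖₊ : ENNReal)) (hfin.mem_toFinset.mpr hk)
  refine lt_of_le_of_lt hle ?_
  rw [Finset.sup_lt_iff (by norm_num : (⊥ : ENNReal) < 1)]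
  intro k hk
  have := key k (hfin.mem_toFinset.mp hk)
  rw [show (1 : ENNReal) = ((1 : NNReal) : ENNReal) from rfl, ENNReal.coe_lt_coe]
  rw [← NNReal.coe_lt_coe]
  simpa using this
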